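/- arXiv:2002.06309 — 5 statements merged into one kernel-verified Lean document; each statement's English description precedes it below -/
import Mathlib

section
/- (Three-point inequality.) Let f : ℝ^d → ℝ be ρ-weakly convex and let X ⊆ ℝ^d be a closed, R-proximally smooth set. Suppose f is L-Lipschitz continuous on an open set U containing X. Fix β > ρ + 3L/R and a point x ∈ X, and let x̃ ∈ X be a minimizer of y ↦ f(y) + (β/2)‖y − x‖² over X. Then for every y ∈ X: f(y) − f(x̃) ≥ ((β − ρ − 3L/R)/2)‖y − x̃‖² + (β/2)‖x − x̃‖² − (β/2)‖y − x‖². -/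
/-!
Proximal smoothness gives the proximal normal inequality
`2R⟪z - p, y - p⟫ ≤ d_X(z) ‖y - p‖²` for a nearest point `p ∈ X` of `z`: maximising `d_X` over
small balls shows that `d_X` grows at unit rate along the ray from `p` through `z` up to
distance `R`. Averaging it over the endpoints of a segment of `X` shows that the point
`z_t = (1 - t) x̃ + t y` lies within `t ‖y - x̃‖² / (2R - t ‖y - x̃‖)` of `X`. At a nearest point of
`z_t` the prox objective `f + (β/2)‖· - x‖²`, which is `(β - ρ)`-strongly convex and Lipschitz
near `x̃`, is at least its minimum value at `x̃`; dividing by `t` and letting `t → 0` yields the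
inequality with the loss `(L + β‖x̃ - x‖) / (2R) ≤ 3L / (2R)`, since minimality gives
`β‖x̃ - x‖ ≤ 2L`.
-/

open Metric Set Filter Topology
open scoped RealInnerProductSpace

section MetricSpace

variable {α : Type*} [MetricSpace α]

def HasUniqueNearestPointWithin (X : Set α) (R : ℝ) : Prop :=
  ∀ u : α, infDist u X < R → ∃! p : α, p ∈ X ∧ dist u p = infDist u X

theorem tendsto_nearest_of_unique [ProperSpace α] {X : Set α} (hX : IsClosed X) {ι : Type*}
    {l : Filter ι} {z y : ι → α} {v q : α} (hq : ∀ c ∈ X, dist v c = infDist v X → c = q)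
    (hz : Tendsto z l (𝓝 v)) (hy : ∀ i, y i ∈ X ∧ dist (z i) (y i) = infDist (z i) X) :
    Tendsto y l (𝓝 q) := by
  have hball : ∀ a > infDist v X, ∀ᶠ i in l, y i ∈ closedBall v a := by
    intro a ha
    filter_upwards [hz.eventually (ball_mem_nhds v (half_pos (sub_pos.2 ha)))] with i hi
    rw [mem_closedBall]
    calc dist (y i) v ≤ dist (z i) (y i) + dist (z i) v := dist_triangle_left _ _ _
      _ ≤ infDist v X + dist (z i) v + dist (z i) v := by
          rw [(hy i).2]; gcongr; exact infDist_le_infDist_add_dist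
      _ ≤ a := by linarith [mem_ball.1 hi]
  refine (isCompact_closedBall v (infDist v X + 1)).tendsto_nhds_of_unique_mapClusterPt
    (hball _ (lt_add_one _)) fun c _ hc => ?_
  have hcX : c ∈ X := hX.mem_of_mapClusterPt hc (Eventually.of_forall fun i => (hy i).1)
  refine hq c hcX (le_antisymm (le_of_forall_gt_imp_ge_of_dense fun a ha => ?_)
    (infDist_le_dist_of_mem hcX))
  exact dist_comm v c ▸ isClosed_closedBall.mem_of_mapClusterPt hc (hball a ha)

end MetricSpace

section NormedGroup

variable {E : Type*} [SeminormedAddCommGroup E] {f : E → ℝ} {L β : ℝ}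

theorem mul_norm_sub_le_of_prox_min (hL : 0 ≤ L) {x xtil : E}
    (hlip : |f x - f xtil| ≤ L * ‖x - xtil‖)
    (hmin : f xtil + β / 2 * ‖xtil - x‖ ^ 2 ≤ f x + β / 2 * ‖x - x‖ ^ 2) :
    β * ‖xtil - x‖ ≤ 2 * L := by
  rw [sub_self, norm_zero] at hmin
  rw [norm_sub_rev] at hlip
  have := (le_abs_self _).trans hlip
  rcases (norm_nonneg (xtil - x)).eq_or_lt with hK | hK
  · rw [← hK, mul_zero]; linarith
  · nlinarith

theorem add_sq_norm_sub_le_of_lipschitz {U : Set E}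
    (hLip : ∀ u ∈ U, ∀ w ∈ U, |f u - f w| ≤ L * ‖u - w‖) (hβ : 0 ≤ β) {x z p : E}
    (hz : z ∈ U) (hp : p ∈ U) :
    f p + β / 2 * ‖p - x‖ ^ 2
      ≤ f z + β / 2 * ‖z - x‖ ^ 2 + ‖p - z‖ * (L + β * (‖z - x‖ + ‖p - z‖ / 2)) := by
  have hf : f p - f z ≤ L * ‖p - z‖ := (le_abs_self _).trans (hLip p hp z hz)
  have hnorm : ‖p - x‖ ≤ ‖z - x‖ + ‖p - z‖ := by
    simpa only [sub_add_sub_cancel'] using norm_add_le (z - x) (p - z)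
  have hsq := pow_le_pow_left₀ (norm_nonneg _) hnorm 2
  nlinarith

end NormedGroup

section InnerProductSpace

variable {E : Type*} [NormedAddCommGroup E] [InnerProductSpace ℝ E] {X : Set E} {R : ℝ}

theorem norm_sub_smul_add_smul_sq (a b c : E) (t : ℝ) :
    ‖(1 - t) • a + t • b - c‖ ^ 2
      = (1 - t) * ‖a - c‖ ^ 2 + t * ‖b - c‖ ^ 2 - t * (1 - t) * ‖a - b‖ ^ 2 := by
  have hsplit : (1 - t) • a + t • b - c = (1 - t) • (a - c) + t • (b - c) := by module
  rw [hsplit, show a - b = (a - c) - (b - c) by abel, norm_add_sq_real,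
    norm_sub_sq_real (a - c), real_inner_smul_left, real_inner_smul_right, norm_smul, norm_smul,
    mul_pow, mul_pow, Real.norm_eq_abs, Real.norm_eq_abs, sq_abs, sq_abs]
  ring

theorem strongConvexOn_add_sq_norm_sub {f : E → ℝ} {ρ : ℝ}
    (hf : ConvexOn ℝ univ fun z => f z + ρ / 2 * ‖z‖ ^ 2) (β : ℝ) (x : E) :
    StrongConvexOn univ (β - ρ) fun z => f z + β / 2 * ‖z - x‖ ^ 2 := by
  rw [strongConvexOn_iff_convex]
  refine ((hf.add (((-β) • innerSL ℝ x).toLinearMap.convexOn convex_univ)).add_const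
    (β / 2 * ‖x‖ ^ 2)).congr fun z _ => ?_
  simp only [neg_smul, ContinuousLinearMap.toLinearMap_neg, ContinuousLinearMap.toLinearMap_smul,
    ContinuousLinearMap.toLinearMap_innerSL_apply, LinearMap.coe_neg, LinearMap.coe_smul,
    coe_innerₛₗ_apply, Pi.add_apply, Pi.neg_apply, Pi.smul_apply, smul_eq_mul, norm_sub_sq_real,
    real_inner_comm x z]
  ring

variable [ProperSpace E]

theorem inner_sub_nearest_nonpos_of_isMaxOn (hX : IsClosed X) (hne : X.Nonempty)
    {C : Set E} (hC : Convex ℝ C) {v q w : E} (hv : v ∈ C) (hw : w ∈ C)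
    (hmax : IsMaxOn (infDist · X) C v) (hq : ∀ c ∈ X, dist v c = infDist v X → c = q) :
    ⟪w - v, v - q⟫ ≤ 0 := by
  choose y hyX hyd using hX.exists_infDist_eq_dist hne
  set z : ℝ → E := fun t => v + t • (w - v)
  have hzC : ∀ t ∈ Icc (0 : ℝ) 1, z t ∈ C := fun t ht => hC.add_smul_sub_mem hv hw ht
  have hstep : ∀ t ∈ Ioc (0 : ℝ) 1, ⟪w - v, z t - y (z t)⟫ ≤ t * ‖w - v‖ ^ 2 / 2 := by
    rintro t ⟨ht0, ht1⟩
    have hfar : infDist v X ≤ ‖v - y (z t)‖ :=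
      dist_eq_norm v _ ▸ infDist_le_dist_of_mem (hyX _)
    have hnear : ‖z t - y (z t)‖ ≤ infDist v X := by
      rw [← dist_eq_norm, ← hyd]; exact hmax (hzC t ⟨ht0.le, ht1⟩)
    have hexpand : ‖v - y (z t)‖ ^ 2
        = ‖z t - y (z t)‖ ^ 2 - 2 * t * ⟪w - v, z t - y (z t)⟫ + t ^ 2 * ‖w - v‖ ^ 2 := by
      rw [show v - y (z t) = (z t - y (z t)) - t • (w - v) by simp only [z]; abel,
        norm_sub_sq_real, real_inner_smul_right, norm_smul, Real.norm_eq_abs, mul_pow, sq_abs,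
        real_inner_comm]
      ring
    have : t * (2 * ⟪w - v, z t - y (z t)⟫) ≤ t * (t * ‖w - v‖ ^ 2) := by
      nlinarith [infDist_nonneg (x := v) (s := X), norm_nonneg (z t - y (z t))]
    linarith [le_of_mul_le_mul_left this ht0]
  have hz : Tendsto z (𝓝[>] 0) (𝓝 v) :=
    ((continuous_const.add (continuous_id.smul continuous_const)).tendsto' 0 v (by simp))
      |>.mono_left nhdsWithin_le_nhds
  have hy : Tendsto (fun t => y (z t)) (𝓝[>] 0) (𝓝 q) :=
    tendsto_nearest_of_unique hX hq hz fun t => ⟨hyX _, (hyd _).symm⟩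
  have hlhs : Tendsto (fun t => ⟪w - v, z t - y (z t)⟫) (𝓝[>] 0) (𝓝 ⟪w - v, v - q⟫) :=
    tendsto_const_nhds.inner (hz.sub hy)
  have hrhs : Tendsto (fun t : ℝ => t * ‖w - v‖ ^ 2 / 2) (𝓝[>] 0) (𝓝 0) :=
    (((continuous_id.mul continuous_const).div_const 2).tendsto' 0 0 (by simp))
      |>.mono_left nhdsWithin_le_nhds
  exact le_of_tendsto_of_tendsto hlhs hrhs
    (eventually_of_mem (Ioc_mem_nhdsGT zero_lt_one) hstep)

theorem infDist_smul_sub_eq_of_isMaxOn_closedBall (hX : IsClosed X) {u v q : E}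
    {δ : ℝ} (hv : v ∈ closedBall u δ) (hmax : IsMaxOn (infDist · X) (closedBall u δ) v)
    (hqX : q ∈ X) (hqd : dist v q = infDist v X)
    (hq : ∀ c ∈ X, dist v c = infDist v X → c = q) (hpos : 0 < infDist v X) :
    infDist v X • (v - u) = δ • (v - q) := by
  set dv := infDist v X
  have hδ : 0 ≤ δ := dist_nonneg.trans hv
  have hvu : ‖v - u‖ ≤ δ := by rw [← dist_eq_norm]; exact hv
  have hg : ‖v - q‖ = dv := by rw [← dist_eq_norm, hqd]
  -- Testing the variational inequality at this point forces equality in Cauchy–Schwarz.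
  have hw : u + (δ / dv) • (v - q) ∈ closedBall u δ := by
    rw [mem_closedBall, dist_eq_norm, add_sub_cancel_left, norm_smul, hg, Real.norm_eq_abs,
      abs_of_nonneg (by positivity), div_mul_cancel₀ _ hpos.ne']
  have hvar :=
    inner_sub_nearest_nonpos_of_isMaxOn hX ⟨q, hqX⟩ (convex_closedBall u δ) hv hw hmax hq
  rw [show u + (δ / dv) • (v - q) - v = (δ / dv) • (v - q) - (v - u) by abel, inner_sub_left,
    real_inner_smul_left, real_inner_self_eq_norm_sq, hg] at hvar
  have hlow : δ * dv ≤ ⟪v - u, v - q⟫ := by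
    have : δ / dv * dv ^ 2 = δ * dv := by field_simp
    linarith
  have hcs : ⟪v - u, v - q⟫ ≤ ‖v - u‖ * dv := hg ▸ real_inner_le_norm _ _
  have hnorm : ‖v - u‖ = δ :=
    le_antisymm hvu (le_of_mul_le_mul_right (hlow.trans hcs) hpos)
  have heq : ⟪v - u, v - q⟫ = ‖v - u‖ * ‖v - q‖ := by
    rw [hnorm, hg]; exact le_antisymm (hnorm ▸ hcs) hlow
  rwa [inner_eq_norm_mul_iff_real, hnorm, hg] at heq

theorem infDist_add_smul_eq_add (hX : IsClosed X) (hR : HasUniqueNearestPointWithin X R)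
    {p n : E} {a δ : ℝ} (hp : p ∈ X) (hn : ‖n‖ = 1) (ha : infDist (p + a • n) X = a)
    (hδ : 0 < δ) (hδa : δ < a) (haδ : a + δ < R) :
    infDist (p + (a + δ) • n) X = a + δ := by
  -- A farthest point from `X` in the `δ`-ball around `p + a • n` turns out to be
  -- `p + (a + δ) • n`.
  set u := p + a • n
  have hup : dist u p = a := by
    rw [dist_eq_norm, add_sub_cancel_left, norm_smul, hn, mul_one, Real.norm_eq_abs,
      abs_of_pos (hδ.trans hδa)]
  obtain ⟨v, hv, hmax⟩ := (isCompact_closedBall u δ).exists_isMaxOn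
    ⟨u, mem_closedBall_self hδ.le⟩ (continuous_infDist_pt X).continuousOn
  set dv := infDist v X
  have hadv : a ≤ dv := ha ▸ hmax (mem_closedBall_self hδ.le)
  have hdvaδ : dv ≤ a + δ := calc
    dv ≤ dist v p := infDist_le_dist_of_mem hp
    _ ≤ dist v u + dist u p := dist_triangle _ _ _
    _ ≤ a + δ := by rw [hup]; linarith [mem_closedBall.1 hv]
  obtain ⟨q, ⟨hqX, hqd⟩, hq⟩ := hR v (by linarith)
  have halign : dv • (v - u) = δ • (v - q) :=
    infDist_smul_sub_eq_of_isMaxOn_closedBall hX hv hmax hqX hqd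
    (fun c hc hcd => hq c ⟨hc, hcd⟩) (by linarith)
  have huq : dv • (u - q) = (dv - δ) • (v - q) := by
    rw [sub_smul, ← halign]; module
  have huqd : dist u q = dv - δ := by
    have := congrArg norm huq
    rw [norm_smul_of_nonneg (by linarith), norm_smul_of_nonneg (by linarith), ← dist_eq_norm,
      ← dist_eq_norm, hqd] at this
    exact mul_left_cancel₀ (by linarith) (this.trans (mul_comm _ _))
  have hdv : dv = a + δ := by
    have := ha ▸ infDist_le_dist_of_mem (x := u) hqX
    linarith
  have hqp : q = p := (hR u (by linarith)).unique ⟨hqX, by rw [huqd, ha]; linarith⟩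
    ⟨hp, by rw [hup, ha]⟩
  rw [hdv, hqp] at halign
  have hvp : v = p + (a + δ) • n := by
    refine smul_right_injective E (hδ.trans hδa).ne' ?_
    simp only [u] at halign
    linear_combination (norm := module) halign
  exact hvp ▸ hdv

theorem infDist_add_smul_eq_of_le (hX : IsClosed X) (hR : HasUniqueNearestPointWithin X R)
    {p n : E} {r s : ℝ} (hp : p ∈ X) (hn : ‖n‖ = 1) (hr : 0 < r)
    (hrX : infDist (p + r • n) X = r) (hrs : r ≤ s) (hsR : s < R) :
    infDist (p + s • n) X = s := by
  -- Steps of length at most `r / 2 < a` keep `infDist_add_smul_eq_add` applicable.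
  suffices h : ∀ k : ℕ, ∀ s, r ≤ s → s < R → s ≤ r + k * (r / 2) → infDist (p + s • n) X = s by
    obtain ⟨k, hk⟩ := exists_nat_ge ((s - r) / (r / 2))
    exact h k s hrs hsR (by linarith [(div_le_iff₀ (half_pos hr)).1 hk])
  intro k
  induction k with
  | zero =>
    intro s hrs _ hsr
    rwa [le_antisymm (by simpa using hsr) hrs]
  | succ k ih =>
    intro s hrs hsR hsk
    by_cases hs : s ≤ r + k * (r / 2)
    · exact ih s hrs hsR hs
    have hra : r ≤ r + k * (r / 2) := le_add_of_nonneg_right (by positivity)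
    have := infDist_add_smul_eq_add hX hR hp hn (ih _ hra (by linarith) le_rfl)
      (sub_pos.2 (not_le.1 hs)) (by push_cast at hsk; linarith) (by linarith)
    rwa [add_sub_cancel] at this

theorem two_mul_inner_le_of_nearest (hX : IsClosed X)
    (hR : HasUniqueNearestPointWithin X R) {z p y : E} (hp : p ∈ X) (hzp : dist z p = infDist z X)
    (hzR : infDist z X < R) (hy : y ∈ X) :
    2 * R * ⟪z - p, y - p⟫ ≤ infDist z X * ‖y - p‖ ^ 2 := by
  set d := infDist z X
  rcases (infDist_nonneg : 0 ≤ d).eq_or_lt with hd | hd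
  · obtain rfl : z = p := dist_eq_zero.1 (hzp.trans hd.symm)
    simpa using mul_nonneg (infDist_nonneg : 0 ≤ d) (sq_nonneg ‖y - z‖)
  set n := d⁻¹ • (z - p)
  have hn : ‖n‖ = 1 := by
    rw [norm_smul, ← dist_eq_norm, hzp, norm_inv, Real.norm_eq_abs, abs_of_pos hd,
      inv_mul_cancel₀ hd.ne']
  have hzn : p + d • n = z := by
    rw [smul_inv_smul₀ hd.ne', add_sub_cancel]
  have hray : ∀ s ∈ Ico d R, 2 * s * ⟪n, y - p⟫ ≤ ‖y - p‖ ^ 2 := by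
    rintro s ⟨hds, hsR⟩
    have hfar : s ≤ ‖s • n - (y - p)‖ := calc
      s = infDist (p + s • n) X :=
        (infDist_add_smul_eq_of_le hX hR hp hn hd (by rw [hzn]) hds hsR).symm
      _ ≤ dist (p + s • n) y := infDist_le_dist_of_mem hy
      _ = ‖s • n - (y - p)‖ := by rw [dist_eq_norm]; congr 1; abel
    have hsq := pow_le_pow_left₀ (hd.le.trans hds) hfar 2
    rw [norm_sub_sq_real, real_inner_smul_left, norm_smul, hn, Real.norm_eq_abs, mul_one,
      sq_abs] at hsq
    linarith
  have hlim : 2 * R * ⟪n, y - p⟫ ≤ ‖y - p‖ ^ 2 := by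
    refine le_of_tendsto ?_ (eventually_of_mem (Ico_mem_nhdsLT hzR) hray)
    exact ((continuous_const.mul continuous_id).mul continuous_const).tendsto' R _ rfl
      |>.mono_left nhdsWithin_le_nhds
  calc 2 * R * ⟪z - p, y - p⟫ = d * (2 * R * ⟪n, y - p⟫) := by
        rw [← hzn, add_sub_cancel_left, real_inner_smul_left]; ring
    _ ≤ d * ‖y - p‖ ^ 2 := by gcongr

theorem infDist_smul_add_smul_mul_le (hX : IsClosed X)
    (hR : HasUniqueNearestPointWithin X R) {a b : E} (ha : a ∈ X) (hb : b ∈ X) {t : ℝ}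
    (ht0 : 0 ≤ t) (ht1 : t ≤ 1) (hzR : infDist ((1 - t) • a + t • b) X < R) :
    infDist ((1 - t) • a + t • b) X * (2 * R - infDist ((1 - t) • a + t • b) X)
      ≤ t * (1 - t) * ‖b - a‖ ^ 2 := by
  set z := (1 - t) • a + t • b
  set d := infDist z X
  obtain ⟨p, hp, hzp⟩ := hX.exists_infDist_eq_dist ⟨a, ha⟩ z
  have hna : 2 * R * ⟪z - p, a - p⟫ ≤ d * ‖a - p‖ ^ 2 :=
    two_mul_inner_le_of_nearest hX hR hp hzp.symm hzR ha
  have hnb : 2 * R * ⟪z - p, b - p⟫ ≤ d * ‖b - p‖ ^ 2 :=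
    two_mul_inner_le_of_nearest hX hR hp hzp.symm hzR hb
  have hd2 : ‖z - p‖ ^ 2 = d ^ 2 := by rw [← dist_eq_norm, ← hzp]
  have hsplit : ‖z - p‖ ^ 2 = (1 - t) * ⟪z - p, a - p⟫ + t * ⟪z - p, b - p⟫ := by
    rw [← real_inner_self_eq_norm_sq, ← real_inner_smul_right, ← real_inner_smul_right,
      ← inner_add_right]
    congr 1; simp only [z]; module
  have hid : ‖z - p‖ ^ 2
      = (1 - t) * ‖a - p‖ ^ 2 + t * ‖b - p‖ ^ 2 - t * (1 - t) * ‖b - a‖ ^ 2 := by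
    rw [norm_sub_rev b a]; exact norm_sub_smul_add_smul_sq a b p t
  have hmain : d * (d * (2 * R)) ≤ d * (d ^ 2 + t * (1 - t) * ‖b - a‖ ^ 2) := calc
    d * (d * (2 * R)) = (1 - t) * (2 * R * ⟪z - p, a - p⟫) + t * (2 * R * ⟪z - p, b - p⟫) := by
      linear_combination (2 * R) * (hsplit - hd2)
    _ ≤ (1 - t) * (d * ‖a - p‖ ^ 2) + t * (d * ‖b - p‖ ^ 2) := by gcongr
    _ = d * (d ^ 2 + t * (1 - t) * ‖b - a‖ ^ 2) := by linear_combination d * (hd2 - hid)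
  rcases (show 0 ≤ d from infDist_nonneg).eq_or_lt with hd | hd
  · rw [← hd, zero_mul]; have := sub_nonneg.2 ht1; positivity
  · nlinarith [le_of_mul_le_mul_left hmain hd]

theorem infDist_smul_add_smul_le (hX : IsClosed X) (hR : HasUniqueNearestPointWithin X R)
    {a b : E} (ha : a ∈ X) (hb : b ∈ X) {t : ℝ} (ht0 : 0 < t) (ht1 : t ≤ 1)
    (htR : t * ‖b - a‖ < R) :
    infDist ((1 - t) • a + t • b) X ≤ t * ‖b - a‖ ^ 2 / (2 * R - t * ‖b - a‖) := by
  have hza : infDist ((1 - t) • a + t • b) X ≤ t * ‖b - a‖ := by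
    refine (infDist_le_dist_of_mem ha).trans_eq ?_
    rw [dist_eq_norm, show (1 - t) • a + t • b - a = t • (b - a) by module, norm_smul,
      Real.norm_eq_abs, abs_of_pos ht0]
  have hseg := infDist_smul_add_smul_mul_le hX hR ha hb ht0.le ht1 (hza.trans_lt htR)
  have htD : 0 ≤ t * ‖b - a‖ := by positivity
  rw [le_div_iff₀ (by linarith)]
  nlinarith [infDist_nonneg (x := (1 - t) • a + t • b) (s := X)]

theorem prox_value_le_along_segment {f : E → ℝ} {ρ L β : ℝ} {U : Set E}
    (hf : ConvexOn ℝ univ fun z => f z + ρ / 2 * ‖z‖ ^ 2) (hX : IsClosed X)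
    (hR : HasUniqueNearestPointWithin X R) (hLip : ∀ u ∈ U, ∀ w ∈ U, |f u - f w| ≤ L * ‖u - w‖)
    (hL : 0 ≤ L) (hβ : 0 ≤ β) {x xtil y : E} (hxtil : xtil ∈ X)
    (hmin : ∀ y ∈ X, f xtil + β / 2 * ‖xtil - x‖ ^ 2 ≤ f y + β / 2 * ‖y - x‖ ^ 2)
    (hy : y ∈ X) {t : ℝ} (ht0 : 0 < t) (ht1 : t ≤ 1) (htR : t * ‖y - xtil‖ < R)
    (hU : closedBall xtil (2 * (t * ‖y - xtil‖)) ⊆ U) :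
    f xtil + β / 2 * ‖xtil - x‖ ^ 2
      ≤ f y + β / 2 * ‖y - x‖ ^ 2 - (β - ρ) / 2 * (1 - t) * ‖y - xtil‖ ^ 2
        + ‖y - xtil‖ ^ 2 / (2 * R - t * ‖y - xtil‖)
          * (L + β * (‖xtil - x‖ + 2 * (t * ‖y - xtil‖))) := by
  set D := ‖y - xtil‖
  set K := ‖xtil - x‖
  set z := (1 - t) • xtil + t • y
  set C := L + β * (K + 2 * (t * D))
  have htD : 0 ≤ t * D := by positivity
  have hzx : dist z xtil = t * D := by
    rw [dist_eq_norm, show z - xtil = t • (y - xtil) by simp only [z]; module, norm_smul,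
      Real.norm_eq_abs, abs_of_pos ht0]
  obtain ⟨p, hp, hzp⟩ := hX.exists_infDist_eq_dist ⟨xtil, hxtil⟩ z
  set d := infDist z X
  have hdD : d ≤ t * D := hzx ▸ infDist_le_dist_of_mem hxtil
  have hzU : z ∈ U := hU (by rw [mem_closedBall, hzx]; linarith)
  have hpU : p ∈ U := hU (by
    rw [mem_closedBall]
    linarith [dist_triangle p z xtil, dist_comm p z])
  have hzxK : ‖z - x‖ ≤ K + t * D := by
    have := dist_triangle z xtil x
    rwa [hzx, dist_eq_norm, dist_eq_norm, add_comm] at this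
  have hconv : f z + β / 2 * ‖z - x‖ ^ 2 ≤ (1 - t) * (f xtil + β / 2 * K ^ 2)
      + t * (f y + β / 2 * ‖y - x‖ ^ 2) - (1 - t) * t * ((β - ρ) / 2 * D ^ 2) := by
    simpa only [smul_eq_mul, norm_sub_rev xtil y] using
      (strongConvexOn_add_sq_norm_sub hf β x).2 (mem_univ xtil) (mem_univ y)
        (sub_nonneg.2 ht1) ht0.le (sub_add_cancel 1 t)
  have hlip := add_sq_norm_sub_le_of_lipschitz (x := x) hLip hβ hzU hpU
  rw [show ‖p - z‖ = d by rw [← dist_eq_norm, dist_comm, hzp]] at hlip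
  have hlipC : d * (L + β * (‖z - x‖ + d / 2)) ≤ d * C := by
    have := mul_le_mul_of_nonneg_left (show ‖z - x‖ + d / 2 ≤ K + 2 * (t * D) by linarith) hβ
    exact mul_le_mul_of_nonneg_left (by linarith) infDist_nonneg
  have hdC : d * C ≤ t * (D ^ 2 / (2 * R - t * D) * C) := by
    have := infDist_smul_add_smul_le hX hR hxtil hy ht0 ht1 htR
    calc d * C ≤ t * D ^ 2 / (2 * R - t * D) * C := by gcongr
      _ = t * (D ^ 2 / (2 * R - t * D) * C) := by ring
  refine le_of_mul_le_mul_left ?_ ht0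
  linear_combination hmin p hp + hlip + hconv + hlipC + hdC

theorem eventually_prox_value_le {f : E → ℝ} {ρ L β : ℝ} {U : Set E}
    (hf : ConvexOn ℝ univ fun z => f z + ρ / 2 * ‖z‖ ^ 2) (hX : IsClosed X)
    (hR : HasUniqueNearestPointWithin X R) (hRpos : 0 < R) (hU : IsOpen U)
    (hLip : ∀ u ∈ U, ∀ w ∈ U, |f u - f w| ≤ L * ‖u - w‖) (hL : 0 ≤ L) (hβ : 0 ≤ β)
    {x xtil y : E} (hxtil : xtil ∈ X) (hxtilU : xtil ∈ U)
    (hmin : ∀ y ∈ X, f xtil + β / 2 * ‖xtil - x‖ ^ 2 ≤ f y + β / 2 * ‖y - x‖ ^ 2)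
    (hy : y ∈ X) :
    ∀ᶠ t in 𝓝[>] 0, f xtil + β / 2 * ‖xtil - x‖ ^ 2
      ≤ f y + β / 2 * ‖y - x‖ ^ 2 - (β - ρ) / 2 * (1 - t) * ‖y - xtil‖ ^ 2
        + ‖y - xtil‖ ^ 2 / (2 * R - t * ‖y - xtil‖)
          * (L + β * (‖xtil - x‖ + 2 * (t * ‖y - xtil‖))) := by
  obtain ⟨ε, hε, hball⟩ := Metric.isOpen_iff.1 hU xtil hxtilU
  have hsmall : ∀ᶠ t in 𝓝[>] (0 : ℝ), 2 * (t * ‖y - xtil‖) < min R ε :=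
    (((continuous_const.mul (continuous_id.mul continuous_const)).tendsto' 0 0 (by simp))
      |>.mono_left nhdsWithin_le_nhds).eventually_lt_const (lt_min hRpos hε)
  filter_upwards [hsmall, Ioc_mem_nhdsGT one_pos] with t hsm ⟨ht0, ht1⟩
  have htD : 0 ≤ t * ‖y - xtil‖ := by positivity
  exact prox_value_le_along_segment hf hX hR hLip hL hβ hxtil hmin hy ht0 ht1
    (by linarith [min_le_left R ε])
    ((closedBall_subset_ball (hsm.trans_le (min_le_right _ _))).trans hball)

end InnerProductSpace

/-- **Three-point inequality.** Let `f` be `ρ`-weakly convex,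
`X` closed and `R`-proximally smooth, `f` `L`-Lipschitz on an open set `U ⊇ X`,
`β > ρ + 3L/R`, `x ∈ X`, and let `x̃` minimize `y ↦ f(y) + (β/2)‖y − x‖²` over `X`.
Then for every `y ∈ X`:
`f(y) − f(x̃) ≥ ((β − ρ − 3L/R)/2)‖y − x̃‖² + (β/2)‖x − x̃‖² − (β/2)‖y − x‖²`. -/
theorem three_point_inequality
    {d : ℕ} (f : EuclideanSpace ℝ (Fin d) → ℝ) (ρ L R β : ℝ)
    (X U : Set (EuclideanSpace ℝ (Fin d)))
    (hρ : 0 < ρ) (hL : 0 < L) (hR : 0 < R)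
    (hwc : ConvexOn ℝ Set.univ fun z => f z + ρ / 2 * ‖z‖ ^ 2)
    (hXc : IsClosed X)
    (hprox : ∀ u : EuclideanSpace ℝ (Fin d), infDist u X < R →
      ∃! p : EuclideanSpace ℝ (Fin d), p ∈ X ∧ dist u p = infDist u X)
    (hU : IsOpen U) (hXU : X ⊆ U)
    (hLip : ∀ u ∈ U, ∀ w ∈ U, |f u - f w| ≤ L * ‖u - w‖)
    (hβ : ρ + 3 * L / R < β)
    (x xtil : EuclideanSpace ℝ (Fin d)) (hx : x ∈ X) (hxtilX : xtil ∈ X)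
    (hmin : ∀ y ∈ X, f xtil + β / 2 * ‖xtil - x‖ ^ 2 ≤ f y + β / 2 * ‖y - x‖ ^ 2) :
    ∀ y ∈ X,
      (β - ρ - 3 * L / R) / 2 * ‖y - xtil‖ ^ 2 + β / 2 * ‖x - xtil‖ ^ 2
        - β / 2 * ‖y - x‖ ^ 2 ≤ f y - f xtil := by
  intro y hy
  have hβ0 : 0 ≤ β := by linarith [show 0 < 3 * L / R by positivity]
  have hstep : β * ‖xtil - x‖ ≤ 2 * L :=
    mul_norm_sub_le_of_prox_min hL.le (hLip x (hXU hx) xtil (hXU hxtilX)) (hmin x hx)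
  have hev := eventually_prox_value_le hwc hXc hprox hR hU hLip hL.le hβ0 hxtilX (hXU hxtilX)
    hmin hy
  have hlim := ge_of_tendsto ((ContinuousAt.tendsto (x := (0 : ℝ)) (by
    fun_prop (disch := simp; positivity))).mono_left nhdsWithin_le_nhds) hev
  simp only [sub_zero, zero_mul, mul_zero, add_zero, mul_one] at hlim
  have h3L : ‖y - xtil‖ ^ 2 / (2 * R) * (L + β * ‖xtil - x‖) ≤ 3 * L / R / 2 * ‖y - xtil‖ ^ 2 :=
    calc ‖y - xtil‖ ^ 2 / (2 * R) * (L + β * ‖xtil - x‖)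
        ≤ ‖y - xtil‖ ^ 2 / (2 * R) * (3 * L) := by gcongr; linarith
      _ = 3 * L / R / 2 * ‖y - xtil‖ ^ 2 := by field_simp
  rw [norm_sub_rev x xtil]
  linarith
end

section
/- Let h : ℝ^m → ℝ be convex and L-Lipschitz, and let c : ℝ^d → ℝ^m be continuously differentiable with β-Lipschitz derivative, i.e., ‖Dc(x) − Dc(y)‖_op ≤ β‖x − y‖ for all x, y. Then the composition f(x) := h(c(x)) is Lβ-weakly convex, i.e., x ↦ h(c(x)) + (Lβ/2)‖x‖² is convex. -/
/-!
Weak convexity of `h ∘ c` amounts to a quadratic lower bound on its defect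
`a h(c x) + b h(c y) - h(c(a x + b y))`. Convexity of `h` passes from `h(c(a x + b y))` to
`h(a c x + b c y)` at the cost of `L` times the linearisation error
`‖a c x + b c y - c(a x + b y)‖`. Expanding `c` to first order around `z = a x + b y` makes the
linear terms cancel, and the second-order Taylor bound `β/2 ‖·‖²` for a `C¹` map with
`β`-Lipschitz derivative bounds that error by `β/2 · a b ‖x - y‖²`. Hence `h ∘ c` is
`(-Lβ)`-strongly convex, which in a Euclidean space means exactly that
`h ∘ c + (Lβ/2)‖·‖²` is convex.
-/

open Set

section LipschitzFDeriv

variable {E F : Type*} [NormedAddCommGroup E] [NormedSpace ℝ E]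
  [NormedAddCommGroup F] [NormedSpace ℝ F] {f : E → F} {β : ℝ}

theorem norm_sub_sub_fderiv_le_of_lipschitz_fderiv (hf : Differentiable ℝ f)
    (hf' : ∀ x y, ‖fderiv ℝ f x - fderiv ℝ f y‖ ≤ β * ‖x - y‖) (x y : E) :
    ‖f y - f x - fderiv ℝ f x (y - x)‖ ≤ β / 2 * ‖y - x‖ ^ 2 := by
  set v := y - x
  let g : ℝ → F := fun t => f (x + t • v) - f x - t • fderiv ℝ f x v
  have hg : ∀ t, HasDerivAt g (fderiv ℝ f (x + t • v) v - fderiv ℝ f x v) t := by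
    intro t
    have hline : HasDerivAt (fun t : ℝ => x + t • v) v t := by
      simpa using ((hasDerivAt_id t).smul_const v).const_add x
    exact (((hf _).hasFDerivAt.comp_hasDerivAt t hline).sub_const (f x)).sub
      (by simpa using (hasDerivAt_id t).smul_const (fderiv ℝ f x v))
  have hB : ∀ t, HasDerivAt (fun t => β * ‖v‖ ^ 2 * (t ^ 2 / 2)) (β * ‖v‖ ^ 2 * t) t :=
    fun t => (((hasDerivAt_pow 2 t).div_const 2).const_mul _).congr_deriv (by ring)
  have hg_bound : ∀ t ∈ Ico (0 : ℝ) 1,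
      ‖fderiv ℝ f (x + t • v) v - fderiv ℝ f x v‖ ≤ β * ‖v‖ ^ 2 * t := by
    intro t ht
    have hdiff : ‖fderiv ℝ f (x + t • v) - fderiv ℝ f x‖ ≤ β * (t * ‖v‖) := by
      simpa [norm_smul, abs_of_nonneg ht.1] using hf' (x + t • v) x
    calc ‖fderiv ℝ f (x + t • v) v - fderiv ℝ f x v‖
        = ‖(fderiv ℝ f (x + t • v) - fderiv ℝ f x) v‖ := rfl
      _ ≤ β * (t * ‖v‖) * ‖v‖ := ContinuousLinearMap.le_of_opNorm_le _ hdiff v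
      _ = β * ‖v‖ ^ 2 * t := by ring
  have hremainder := image_norm_le_of_norm_deriv_right_le_deriv_boundary
    (fun t _ => (hg t).continuousAt.continuousWithinAt) (fun t _ => (hg t).hasDerivWithinAt)
    (by simp [g]) hB hg_bound (right_mem_Icc.2 zero_le_one)
  convert hremainder using 1
  · simp [g, v]
  · ring

theorem norm_smul_add_smul_sub_apply_le_of_lipschitz_fderiv (hf : Differentiable ℝ f)
    (hf' : ∀ x y, ‖fderiv ℝ f x - fderiv ℝ f y‖ ≤ β * ‖x - y‖) (x y : E) {a b : ℝ}
    (ha : 0 ≤ a) (hb : 0 ≤ b) (hab : a + b = 1) :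
    ‖a • f x + b • f y - f (a • x + b • y)‖ ≤ β / 2 * (a * b) * ‖x - y‖ ^ 2 := by
  have hxz : x - (a • x + b • y) = b • (x - y) := by
    rw [show a = 1 - b by linarith]; module
  have hyz : y - (a • x + b • y) = a • (y - x) := by
    rw [show b = 1 - a by linarith]; module
  set z := a • x + b • y
  set f' := fderiv ℝ f z
  have hsplit : a • f x + b • f y - f z
      = a • (f x - f z - f' (x - z)) + b • (f y - f z - f' (y - z)) := by
    have hbalance : a • (x - z) + b • (y - z) = 0 := by
      rw [hxz, hyz]; module
    have hlin : a • f' (x - z) + b • f' (y - z) = 0 := by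
      rw [← map_smul, ← map_smul, ← map_add, hbalance, map_zero]
    calc a • f x + b • f y - f z
        = a • f x + b • f y - (a + b) • f z - (a • f' (x - z) + b • f' (y - z)) := by
          rw [hab, one_smul, hlin, sub_zero]
      _ = _ := by module
  calc ‖a • f x + b • f y - f z‖
      ≤ a * ‖f x - f z - f' (x - z)‖ + b * ‖f y - f z - f' (y - z)‖ := by
        rw [hsplit]
        refine (norm_add_le _ _).trans_eq ?_
        rw [norm_smul_of_nonneg ha, norm_smul_of_nonneg hb]
    _ ≤ a * (β / 2 * ‖x - z‖ ^ 2) + b * (β / 2 * ‖y - z‖ ^ 2) := by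
        gcongr
        · exact norm_sub_sub_fderiv_le_of_lipschitz_fderiv hf hf' z x
        · exact norm_sub_sub_fderiv_le_of_lipschitz_fderiv hf hf' z y
    _ = β / 2 * (a * b) * ‖x - y‖ ^ 2 := by
        rw [hxz, hyz, norm_smul_of_nonneg ha, norm_smul_of_nonneg hb, norm_sub_rev y x]
        linear_combination (β / 2 * a * b * ‖x - y‖ ^ 2) * hab

theorem ConvexOn.strongConvexOn_comp_of_lipschitz_fderiv {h : F → ℝ} {c : E → F} {L : ℝ}
    (hconv : ConvexOn ℝ univ h) (hL : 0 ≤ L) (hlip : ∀ u w, |h u - h w| ≤ L * ‖u - w‖)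
    (hc : Differentiable ℝ c) (hder : ∀ x y, ‖fderiv ℝ c x - fderiv ℝ c y‖ ≤ β * ‖x - y‖) :
    StrongConvexOn univ (-(L * β)) (h ∘ c) := by
  refine ⟨convex_univ, fun x _ y _ a b ha hb hab => ?_⟩
  have hconv_c : h (a • c x + b • c y) ≤ a * h (c x) + b * h (c y) := by
    simpa using hconv.2 (mem_univ (c x)) (mem_univ (c y)) ha hb hab
  have hlip_c : h (c (a • x + b • y)) - h (a • c x + b • c y)
      ≤ L * ‖a • c x + b • c y - c (a • x + b • y)‖ :=
    (le_abs_self _).trans (by rw [abs_sub_comm]; exact hlip _ _)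
  have herr := mul_le_mul_of_nonneg_left
    (norm_smul_add_smul_sub_apply_le_of_lipschitz_fderiv hc hder x y ha hb hab) hL
  simp only [Function.comp_apply, smul_eq_mul]
  linarith

end LipschitzFDeriv

theorem composite_weakly_convex_general
    {d m : ℕ} (h : EuclideanSpace ℝ (Fin m) → ℝ)
    (c : EuclideanSpace ℝ (Fin d) → EuclideanSpace ℝ (Fin m))
    (L β : ℝ) (hL : 0 ≤ L)
    (hconv : ConvexOn ℝ Set.univ h)
    (hlip : ∀ u w : EuclideanSpace ℝ (Fin m), |h u - h w| ≤ L * ‖u - w‖)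
    (hc : ContDiff ℝ 1 c)
    (hder : ∀ x y : EuclideanSpace ℝ (Fin d),
      ‖fderiv ℝ c x - fderiv ℝ c y‖ ≤ β * ‖x - y‖) :
    ConvexOn ℝ Set.univ fun x => h (c x) + L * β / 2 * ‖x‖ ^ 2 := by
  have hweak := hconv.strongConvexOn_comp_of_lipschitz_fderiv hL hlip
    (hc.differentiable one_ne_zero) hder
  rw [strongConvexOn_iff_convex] at hweak
  simpa only [Function.comp_apply, neg_div, neg_mul, sub_neg_eq_add] using hweak

/-- If `h` is convex and `L`-Lipschitz and `c` is `C¹` with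
`β`-Lipschitz derivative, then `x ↦ h(c(x))` is `Lβ`-weakly convex, i.e.
`x ↦ h(c(x)) + (Lβ/2)‖x‖²` is convex. -/
theorem composite_weakly_convex
    {d m : ℕ} (h : EuclideanSpace ℝ (Fin m) → ℝ)
    (c : EuclideanSpace ℝ (Fin d) → EuclideanSpace ℝ (Fin m))
    (L β : ℝ) (hL : 0 ≤ L) (hβ : 0 ≤ β)
    (hconv : ConvexOn ℝ Set.univ h)
    (hlip : ∀ u w : EuclideanSpace ℝ (Fin m), |h u - h w| ≤ L * ‖u - w‖)
    (hc : ContDiff ℝ 1 c)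
    (hder : ∀ x y : EuclideanSpace ℝ (Fin d),
      ‖fderiv ℝ c x - fderiv ℝ c y‖ ≤ β * ‖x - y‖) :
    ConvexOn ℝ Set.univ fun x => h (c x) + L * β / 2 * ‖x‖ ^ 2 :=
  composite_weakly_convex_general h c L β hL hconv hlip hc hder
end

section
/- (Error bound for models implies quadratic set accuracy.) Let g : ℝ^d → ℝ ∪ {+∞} with sublevel set X := {y : g(y) ≤ 0}, fix x̄ ∈ X and γ > 0, and let g_x̄ : ℝ^d → ℝ ∪ {+∞} satisfy |g_x̄(y) − g(y)| ≤ (γ/2)‖y − x̄‖² for all y ∈ ℝ^d (with g_x̄(y) = +∞ exactly when g(y) = +∞). Define G_x̄(y) := g_x̄(y) + (γ/2)‖y − x̄‖² and X_x̄ := {y : G_x̄(y) ≤ 0}. Suppose there exist κ, r, ε > 0 such that dist(y, X_x̄) ≤ κ·max(G_x̄(y), 0) for all y ∈ B(x̄, ε) with G_x̄(y) ≤ r. Then dist(y, X_x̄) ≤ γκ·‖y − x̄‖² for all y ∈ X with ‖y − x̄‖ ≤ δ, where δ := min{ε, √(r/γ)}. -/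
open Metric

/-- The model `G_x̄(y) := g_x̄(y) + (γ/2)‖y − x̄‖²` built from a model `g_x̄`. -/
noncomputable def Gmodel {d : ℕ} (gx : EuclideanSpace ℝ (Fin d) → EReal) (γ : ℝ)
    (xb : EuclideanSpace ℝ (Fin d)) : EuclideanSpace ℝ (Fin d) → EReal :=
  fun y => gx y + ((γ / 2 * ‖y - xb‖ ^ 2 : ℝ) : EReal)

/-!
On `X` the approximation bound gives `g_x̄(y) ≤ (γ/2)‖y − x̄‖²`, hence `G_x̄(y) ≤ γ‖y − x̄‖²`.
For `‖y − x̄‖ ≤ √(r/γ)` this is at most `r`, so the error bound applies at `y` and yields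
`dist(y, X_x̄) ≤ κ · γ‖y − x̄‖²`.
-/

-- `toReal` sends `⊥` and `⊤` to `0`, so no finiteness assumption on `x` is needed.
lemma EReal.max_toReal_zero_le {x : EReal} {a : ℝ} (hx : x ≤ a) (ha : 0 ≤ a) :
    max x.toReal 0 ≤ a := by
  induction x using EReal.rec with
  | bot => simpa using ha
  | top => simp at hx
  | coe x => exact max_le (by exact_mod_cast hx) ha

lemma Gmodel_le_of_le {d : ℕ} {gx : EuclideanSpace ℝ (Fin d) → EReal} {γ : ℝ}
    {xb y : EuclideanSpace ℝ (Fin d)} (hy : gx y ≤ ((γ / 2 * ‖y - xb‖ ^ 2 : ℝ) : EReal)) :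
    Gmodel gx γ xb y ≤ ((γ * ‖y - xb‖ ^ 2 : ℝ) : EReal) :=
  calc Gmodel gx γ xb y
      ≤ ((γ / 2 * ‖y - xb‖ ^ 2 : ℝ) : EReal) + ((γ / 2 * ‖y - xb‖ ^ 2 : ℝ) : EReal) :=
        add_le_add_left hy _
    _ = ((γ * ‖y - xb‖ ^ 2 : ℝ) : EReal) := by rw [← EReal.coe_add]; ring_nf

lemma mul_sq_le_of_le_sqrt_div {γ r t : ℝ} (hγ : 0 < γ) (hr : 0 < r) (ht : 0 ≤ t)
    (h : t ≤ √(r / γ)) : γ * t ^ 2 ≤ r := by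
  rw [Real.le_sqrt ht (div_pos hr hγ).le, le_div_iff₀ hγ] at h
  linarith

theorem error_bound_implies_set_accuracy_general
    {d : ℕ} (g gx : EuclideanSpace ℝ (Fin d) → EReal)
    (γ κ r ε : ℝ) (hγ : 0 < γ) (hκ : 0 < κ) (hr : 0 < r)
    (xb : EuclideanSpace ℝ (Fin d))
    (happ₁ : ∀ y, gx y ≤ g y + ((γ / 2 * ‖y - xb‖ ^ 2 : ℝ) : EReal))
    (heb : ∀ y, ‖y - xb‖ ≤ ε → Gmodel gx γ xb y ≤ (r : EReal) →
      infDist y {z | Gmodel gx γ xb z ≤ 0}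
        ≤ κ * max (Gmodel gx γ xb y).toReal 0) :
    ∀ y, g y ≤ 0 → ‖y - xb‖ ≤ min ε (Real.sqrt (r / γ)) →
      infDist y {z | Gmodel gx γ xb z ≤ 0} ≤ γ * κ * ‖y - xb‖ ^ 2 := by
  intro y hy hnear
  have hgx : gx y ≤ ((γ / 2 * ‖y - xb‖ ^ 2 : ℝ) : EReal) := by
    simpa using (happ₁ y).trans (add_le_add_left hy _)
  have hG := Gmodel_le_of_le hgx
  have hGr : γ * ‖y - xb‖ ^ 2 ≤ r :=
    mul_sq_le_of_le_sqrt_div hγ hr (norm_nonneg _) (hnear.trans (min_le_right _ _))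
  calc infDist y {z | Gmodel gx γ xb z ≤ 0}
      ≤ κ * max (Gmodel gx γ xb y).toReal 0 :=
        heb y (hnear.trans (min_le_left _ _)) (hG.trans (by exact_mod_cast hGr))
    _ ≤ κ * (γ * ‖y - xb‖ ^ 2) :=
        mul_le_mul_of_nonneg_left (EReal.max_toReal_zero_le hG (by positivity)) hκ.le
    _ = γ * κ * ‖y - xb‖ ^ 2 := by ring

/-- **Error bound for models implies quadratic set accuracy.** -/
theorem error_bound_implies_set_accuracy
    {d : ℕ} (g gx : EuclideanSpace ℝ (Fin d) → EReal)
    (hgbot : ∀ y, g y ≠ ⊥) (hgxbot : ∀ y, gx y ≠ ⊥)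
    (γ κ r ε : ℝ) (hγ : 0 < γ) (hκ : 0 < κ) (hr : 0 < r) (hε : 0 < ε)
    (xb : EuclideanSpace ℝ (Fin d)) (hxb : g xb ≤ 0)
    (htop : ∀ y, (gx y = ⊤ ↔ g y = ⊤))
    (happ₁ : ∀ y, gx y ≤ g y + ((γ / 2 * ‖y - xb‖ ^ 2 : ℝ) : EReal))
    (happ₂ : ∀ y, g y ≤ gx y + ((γ / 2 * ‖y - xb‖ ^ 2 : ℝ) : EReal))
    (heb : ∀ y, ‖y - xb‖ ≤ ε → Gmodel gx γ xb y ≤ (r : EReal) →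
      infDist y {z | Gmodel gx γ xb z ≤ 0}
        ≤ κ * max (Gmodel gx γ xb y).toReal 0) :
    ∀ y, g y ≤ 0 → ‖y - xb‖ ≤ min ε (Real.sqrt (r / γ)) →
      infDist y {z | Gmodel gx γ xb z ≤ 0} ≤ γ * κ * ‖y - xb‖ ^ 2 :=
  error_bound_implies_set_accuracy_general g gx γ κ r ε hγ hκ hr xb happ₁ heb
end

section
/- (Slope-based one-point error bound; Ioffe's basic lemma.) Let h : ℝ^d → ℝ ∪ {+∞} be lower semicontinuous, fix x̄ with h(x̄) < +∞, and suppose there are constants α ∈ ℝ and κ, ε > 0 satisfying 0 ≤ h(x̄) − α < ε/κ and such that the slope satisfies |∇h|(x) ≥ 1/κ for all x ∈ B(x̄, ε) with α < h(x) ≤ h(x̄). Then the sublevel set {h ≤ α} is nonempty and dist(x̄, {h ≤ α}) ≤ κ(h(x̄) − α). -/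
open Metric
open scoped Topology

/-!
A finite-dimensional substitute for Ekeland's variational principle. With `t = h x̄ − α` and
`κ t < r`, pick `t / r < σ < 1 / κ` and minimize the lower semicontinuous function
`h + σ ‖· − x̄‖` over the compact ball `B(x̄, r)`. If a minimizer `z` had `h z > α`, comparing
with `x̄` gives `σ ‖z − x̄‖ < t ≤ σ r`, so `z` is an interior point, hence a local minimizer of
the penalized function; by the triangle inequality its slope is then at most `σ < 1 / κ`,
contradicting the hypothesis. So the sublevel set meets `B(x̄, r)` for every `r ∈ (κ t, ε]`.
-/

/-- The slope `|∇h|(x) = limsup_{y→x, y≠x} max(h(x) − h(y), 0)/‖x − y‖` of an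
extended-real-valued function. -/
noncomputable def erealSlope {d : ℕ} (h : EuclideanSpace ℝ (Fin d) → EReal)
    (x : EuclideanSpace ℝ (Fin d)) : EReal :=
  Filter.limsup (fun y => max (h x - h y) 0 * (((‖x - y‖⁻¹ : ℝ)) : EReal)) (𝓝[≠] x)

section

variable {d : ℕ} {h : EuclideanSpace ℝ (Fin d) → EReal}

theorem erealSlope_le_of_eventually_le {x : EuclideanSpace ℝ (Fin d)} {σ : ℝ} (hσ : 0 ≤ σ)
    (hx : ∀ᶠ y in 𝓝[≠] x, h x ≤ h y + ((σ * ‖x - y‖ : ℝ) : EReal)) :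
    erealSlope h x ≤ σ := by
  refine Filter.limsup_le_of_le (by isBoundedDefault) ?_
  filter_upwards [hx, self_mem_nhdsWithin] with y hy hyx
  have hxy : 0 < ‖x - y‖ := norm_sub_pos_iff.2 (Ne.symm hyx)
  have hpos_part : max (h x - h y) 0 ≤ ((σ * ‖x - y‖ : ℝ) : EReal) := by
    refine max_le ?_ (by exact_mod_cast by positivity)
    rwa [EReal.sub_le_iff_le_add (.inr (EReal.coe_ne_top _)) (.inr (EReal.coe_ne_bot _)),
      add_comm]
  calc max (h x - h y) 0 * ((‖x - y‖⁻¹ : ℝ) : EReal)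
      ≤ ((σ * ‖x - y‖ : ℝ) : EReal) * ((‖x - y‖⁻¹ : ℝ) : EReal) :=
        mul_le_mul_of_nonneg_right hpos_part (by exact_mod_cast by positivity)
    _ = σ := by rw [← EReal.coe_mul, mul_inv_cancel_right₀ hxy.ne']

theorem erealSlope_le_of_isLocalMin_add_dist {x₀ z : EuclideanSpace ℝ (Fin d)} {σ : ℝ}
    (hσ : 0 ≤ σ) (hz : IsLocalMin (fun y => h y + ((σ * dist y x₀ : ℝ) : EReal)) z) :
    erealSlope h z ≤ σ := by
  refine erealSlope_le_of_eventually_le hσ (Filter.Eventually.filter_mono nhdsWithin_le_nhds ?_)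
  filter_upwards [hz] with y hy
  rw [← (EReal.addLECancellable_coe (σ * dist z x₀)).add_le_add_iff_right]
  calc h z + ((σ * dist z x₀ : ℝ) : EReal) ≤ h y + ((σ * dist y x₀ : ℝ) : EReal) := hy
    _ ≤ h y + ((σ * ‖z - y‖ + σ * dist z x₀ : ℝ) : EReal) := by
        gcongr
        rw [← dist_eq_norm, ← mul_add, dist_comm z y]
        exact mul_le_mul_of_nonneg_left (dist_triangle y z x₀) hσ
    _ = h y + ((σ * ‖z - y‖ : ℝ) : EReal) + ((σ * dist z x₀ : ℝ) : EReal) := by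
        rw [EReal.coe_add, add_assoc]

theorem exists_le_mem_closedBall_of_le_erealSlope (hlsc : LowerSemicontinuous h)
    {xb : EuclideanSpace ℝ (Fin d)} (hfin : h xb ≠ ⊤) {α κ r : ℝ} (hκ : 0 < κ)
    (hα : (α : EReal) ≤ h xb) (hr : κ * ((h xb).toReal - α) < r)
    (hslope : ∀ y, ‖y - xb‖ ≤ r → (α : EReal) < h y → h y ≤ h xb →
      ((1 / κ : ℝ) : EReal) ≤ erealSlope h y) :
    ∃ z, h z ≤ α ∧ z ∈ closedBall xb r := by
  set t := (h xb).toReal - α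
  have hxb : h xb = ((h xb).toReal : EReal) := (EReal.coe_toReal hfin (ne_bot_of_le_ne_bot
    (EReal.coe_ne_bot α) hα)).symm
  have ht : 0 ≤ t := sub_nonneg.2 (by rw [hxb] at hα; exact_mod_cast hα)
  have hr₀ : 0 < r := (mul_nonneg hκ.le ht).trans_lt hr
  obtain ⟨σ, htσ, hσκ⟩ : ∃ σ, t / r < σ ∧ σ < 1 / κ :=
    exists_between (by rwa [div_lt_div_iff₀ hr₀ hκ, one_mul, mul_comm])
  have hσ : 0 < σ := (div_nonneg ht hr₀.le).trans_lt htσ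
  set g := fun y => h y + ((σ * dist y xb : ℝ) : EReal)
  have hg : LowerSemicontinuous g := hlsc.add'
    (continuous_coe_real_ereal.comp (by fun_prop)).lowerSemicontinuous fun y =>
      EReal.continuousAt_add (.inr (EReal.coe_ne_bot _)) (.inr (EReal.coe_ne_top _))
  obtain ⟨z, hzr, hzmin⟩ := (hg.lowerSemicontinuousOn _).exists_isMinOn
    (nonempty_closedBall.2 hr₀.le) (isCompact_closedBall xb r)
  refine ⟨z, ?_, hzr⟩
  by_contra! hαz
  have hgz : g z ≤ h xb := by simpa [g] using hzmin (mem_closedBall_self hr₀.le)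
  have hzxb : h z ≤ h xb :=
    (le_add_of_nonneg_right (by exact_mod_cast by positivity)).trans hgz
  have hdist : dist z xb < r := by
    have hlt : α + σ * dist z xb < (h xb).toReal := by
      rw [← EReal.coe_lt_coe_iff, EReal.coe_add, ← hxb]
      exact (EReal.add_lt_add_right_coe hαz _).trans_le hgz
    have : σ * dist z xb < σ * r := by linarith [(div_lt_iff₀ hr₀).1 htσ]
    exact lt_of_mul_lt_mul_left this hσ.le
  have hloc : IsLocalMin g z := hzmin.isLocalMin (closedBall_mem_nhds_of_mem (mem_ball.2 hdist))
  have hslope_z := (hslope z (by rwa [← dist_eq_norm, ← mem_closedBall]) hαz hzxb).trans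
    (erealSlope_le_of_isLocalMin_add_dist hσ.le hloc)
  exact hσκ.not_ge (EReal.coe_le_coe_iff.1 hslope_z)

end

theorem ioffe_basic_lemma_general
    {d : ℕ} (h : EuclideanSpace ℝ (Fin d) → EReal)
    (hlsc : LowerSemicontinuous h)
    (xb : EuclideanSpace ℝ (Fin d)) (hfin : h xb ≠ ⊤)
    (α κ ε : ℝ) (hκ : 0 < κ)
    (hα₁ : (α : EReal) ≤ h xb) (hα₂ : (h xb).toReal - α < ε / κ)
    (hslope : ∀ y, ‖y - xb‖ ≤ ε → (α : EReal) < h y → h y ≤ h xb →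
      ((1 / κ : ℝ) : EReal) ≤ erealSlope h y) :
    {y | h y ≤ (α : EReal)}.Nonempty ∧
      infDist xb {y | h y ≤ (α : EReal)} ≤ κ * ((h xb).toReal - α) := by
  have hε : κ * ((h xb).toReal - α) < ε := (lt_div_iff₀' hκ).1 hα₂
  have key : ∀ r, κ * ((h xb).toReal - α) < r → r ≤ ε →
      ∃ z, h z ≤ α ∧ z ∈ closedBall xb r := fun r hr hrε =>
    exists_le_mem_closedBall_of_le_erealSlope hlsc hfin hκ hα₁ hr
      fun y hy => hslope y (hy.trans hrε)
  obtain ⟨z, hz, -⟩ := key ε hε le_rfl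
  refine ⟨⟨z, hz⟩, le_of_forall_gt_imp_ge_of_dense fun c hc => ?_⟩
  obtain ⟨w, hw, hwr⟩ := key (min c ε) (lt_min hc hε) (min_le_right c ε)
  calc infDist xb {y | h y ≤ (α : EReal)} ≤ dist xb w := infDist_le_dist_of_mem hw
    _ ≤ c := (mem_closedBall'.1 hwr).trans (min_le_left c ε)

/-- **Slope-based one-point error bound; Ioffe's basic lemma.** -/
theorem ioffe_basic_lemma
    {d : ℕ} (h : EuclideanSpace ℝ (Fin d) → EReal)
    (hlsc : LowerSemicontinuous h) (hbot : ∀ y, h y ≠ ⊥)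
    (xb : EuclideanSpace ℝ (Fin d)) (hfin : h xb ≠ ⊤)
    (α κ ε : ℝ) (hκ : 0 < κ) (hε : 0 < ε)
    (hα₁ : (α : EReal) ≤ h xb) (hα₂ : (h xb).toReal - α < ε / κ)
    (hslope : ∀ y, ‖y - xb‖ ≤ ε → (α : EReal) < h y → h y ≤ h xb →
      ((1 / κ : ℝ) : EReal) ≤ erealSlope h y) :
    {y | h y ≤ (α : EReal)}.Nonempty ∧
      infDist xb {y | h y ≤ (α : EReal)} ≤ κ * ((h xb).toReal - α) :=
  ioffe_basic_lemma_general h hlsc xb hfin α κ ε hκ hα₁ hα₂ hslope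
end

section
/- (Slope-based local error bound on a ball.) Let h : ℝ^d → ℝ ∪ {+∞} be lower semicontinuous, fix x̄ with h(x̄) < +∞, and suppose there are constants α, β ∈ ℝ and κ, ε > 0 satisfying 0 < β − α < ε/(2κ) and such that the slope satisfies |∇h|(x) ≥ 1/κ for all x ∈ B(x̄, ε) with α < h(x) ≤ β. Then for every x ∈ B(x̄, ε/2) with h(x) ≤ β one has dist(x, {h ≤ α}) ≤ κ·max(h(x) − α, 0). -/
/-!
Truncating `h` to `[α, β]` gives a bounded-below lower semicontinuous real function, to which
Ekeland's variational principle applies at `y` with constant `(h y - α) / t`, for any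
`t ∈ (κ (h y - α), ε / 2)`. The Ekeland point `v` lies within `t` of `y`, hence in `B(x̄, ε)`,
and `h` has slope at most `(h y - α) / t < 1 / κ` there; so `v` cannot lie in `{α < h ≤ β}`,
i.e. `h v ≤ α`. Letting `t` decrease to `κ (h y - α)` gives the bound.
-/

open Metric
open scoped Topology

open Set Filter

section Ekeland

variable {X : Type*} [MetricSpace X] {f : X → ℝ} {c : ℝ}

def ekelandSet (f : X → ℝ) (c : ℝ) (w : X) : Set X :=
  {z | f z + c * dist z w ≤ f w}

theorem mem_ekelandSet_self (w : X) : w ∈ ekelandSet f c w := by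
  simp [ekelandSet]

theorem ekelandSet_subset (hc : 0 ≤ c) {w z : X} (hz : z ∈ ekelandSet f c w) :
    ekelandSet f c z ⊆ ekelandSet f c w := fun u hu => by
  simp only [ekelandSet, mem_ofPred_eq] at hz hu ⊢
  nlinarith [dist_triangle u z w]

theorem isClosed_ekelandSet (hf : LowerSemicontinuous f) (w : X) :
    IsClosed (ekelandSet f c w) :=
  (hf.add (continuous_const.mul (continuous_id.dist continuous_const)).lowerSemicontinuous
    ).isClosed_preimage (f w)

theorem exists_mem_ekelandSet_subset_closedBall (hbdd : BddBelow (range f)) (hc : 0 < c)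
    {δ : ℝ} (hδ : 0 < δ) (w : X) :
    ∃ z ∈ ekelandSet f c w, ekelandSet f c z ⊆ closedBall z δ := by
  set m := sInf (f '' ekelandSet f c w)
  obtain ⟨_, ⟨z, hzw, rfl⟩, hzm⟩ : ∃ a ∈ f '' ekelandSet f c w, a < m + c * δ :=
    exists_lt_of_csInf_lt ⟨f w, w, mem_ekelandSet_self w, rfl⟩
      (lt_add_of_pos_right m (mul_pos hc hδ))
  refine ⟨z, hzw, fun u hu => ?_⟩
  have hmu : m ≤ f u := csInf_le (hbdd.mono (image_subset_range _ _))
    ⟨u, ekelandSet_subset hc.le hzw hu, rfl⟩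
  have hu' : f u + c * dist u z ≤ f z := hu
  rw [mem_closedBall]
  nlinarith

/-- **Ekeland's variational principle.** -/
theorem exists_forall_le_add_dist_of_lowerSemicontinuous [CompleteSpace X]
    (hf : LowerSemicontinuous f) (hbdd : BddBelow (range f)) (hc : 0 < c) (x₀ : X) :
    ∃ v, f v + c * dist v x₀ ≤ f x₀ ∧ ∀ x, f v ≤ f x + c * dist x v := by
  choose T hT hTball using fun (n : ℕ) =>
    exists_mem_ekelandSet_subset_closedBall hbdd hc (Nat.one_div_pos_of_nat (n := n))
  let x : ℕ → X := fun n => Nat.rec (motive := fun _ => X) x₀ T n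
  let S : ℕ → Set X := fun n => ekelandSet f c (x (n + 1))
  have hS_anti : Antitone S := antitone_nat_of_succ_le fun n =>
    ekelandSet_subset hc.le (hT (n + 1) (x (n + 1)))
  have hS_ball (n : ℕ) : S n ⊆ closedBall (x (n + 1)) (1 / (n + 1)) := hTball n (x n)
  have hS_diam : Tendsto (fun n => diam (S n)) atTop (𝓝 0) := by
    refine squeeze_zero (fun n => diam_nonneg) (fun n => (diam_mono (hS_ball n)
      isBounded_closedBall).trans (diam_closedBall (by positivity))) ?_
    simpa using tendsto_one_div_add_atTop_nhds_zero_nat.const_mul (2 : ℝ)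
  obtain ⟨v, hv⟩ : (⋂ n, S n).Nonempty :=
    nonempty_iInter_of_nonempty_biInter (fun n => isClosed_ekelandSet hf _)
      (fun n => isBounded_closedBall.subset (hS_ball n))
      (fun N => ⟨x (N + 1), mem_iInter₂.2 fun n hn => hS_anti hn (mem_ekelandSet_self _)⟩) hS_diam
  rw [mem_iInter] at hv
  have hv_unique : ∀ z ∈ ekelandSet f c v, z = v := fun z hz => by
    have hdist (n : ℕ) : dist z v ≤ diam (S n) :=
      dist_le_diam_of_mem (isBounded_closedBall.subset (hS_ball n))
        (ekelandSet_subset hc.le (hv n) hz) (hv n)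
    exact dist_le_zero.1 (ge_of_tendsto' hS_diam hdist)
  refine ⟨v, ekelandSet_subset hc.le (hT 0 x₀) (hv 0), fun z => ?_⟩
  by_contra! hz
  obtain rfl := hv_unique z hz.le
  simp at hz

end Ekeland

section ClampToReal

variable {a b : ℝ}

noncomputable def clampToReal (a b : ℝ) (t : EReal) : ℝ :=
  (min (max t a) b).toReal

theorem coe_clampToReal (hab : a ≤ b) (t : EReal) :
    (clampToReal a b t : EReal) = min (max t a) b :=
  EReal.coe_toReal ((min_le_right _ _).trans_lt (EReal.coe_lt_top b)).ne
    ((EReal.bot_lt_coe a).trans_le (le_min le_sup_right (EReal.coe_le_coe_iff.2 hab))).ne'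

theorem le_clampToReal (hab : a ≤ b) (t : EReal) : a ≤ clampToReal a b t := by
  rw [← EReal.coe_le_coe_iff, coe_clampToReal hab]
  exact le_min le_sup_right (EReal.coe_le_coe_iff.2 hab)

theorem clampToReal_of_le (hab : a ≤ b) {t : EReal} (ht : b ≤ t) : clampToReal a b t = b := by
  rw [← EReal.coe_eq_coe_iff, coe_clampToReal hab]
  exact min_eq_right (le_sup_of_le_left ht)

theorem coe_clampToReal_le {t : EReal} (hab : a ≤ b) (ht : a ≤ t) :
    (clampToReal a b t : EReal) ≤ t := by
  rw [coe_clampToReal hab, max_eq_left ht]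
  exact min_le_left _ _

theorem coe_clampToReal_of_mem_Icc {t : EReal} (hat : a ≤ t) (htb : t ≤ b) :
    (clampToReal a b t : EReal) = t := by
  rw [coe_clampToReal (EReal.coe_le_coe_iff.1 (hat.trans htb)), max_eq_left hat, min_eq_left htb]

theorem monotone_clampToReal (hab : a ≤ b) : Monotone (clampToReal a b) := fun s t hst => by
  rw [← EReal.coe_le_coe_iff, coe_clampToReal hab, coe_clampToReal hab]
  gcongr

theorem continuous_clampToReal (hab : a ≤ b) : Continuous (clampToReal a b) := by
  rw [← EReal.continuous_coe_iff]
  simp_rw [coe_clampToReal hab]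
  exact (continuous_id.max continuous_const).min continuous_const

theorem LowerSemicontinuous.clampToReal {X : Type*} [TopologicalSpace X] {h : X → EReal}
    (hh : LowerSemicontinuous h) (hab : a ≤ b) :
    LowerSemicontinuous fun x => clampToReal a b (h x) :=
  (continuous_clampToReal hab).comp_lowerSemicontinuous hh (monotone_clampToReal hab)

end ClampToReal

theorem erealSlope_le_of_eventually_le_add {d : ℕ} {h : EuclideanSpace ℝ (Fin d) → EReal}
    {v : EuclideanSpace ℝ (Fin d)} {c : ℝ} (hc : 0 ≤ c)
    (hle : ∀ᶠ z in 𝓝[≠] v, h v ≤ h z + ((c * ‖z - v‖ : ℝ) : EReal)) :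
    erealSlope h v ≤ c := by
  refine Filter.limsup_le_of_le (by isBoundedDefault) ?_
  filter_upwards [hle, self_mem_nhdsWithin] with z hz hzv
  have hzv' : ‖z - v‖ ≠ 0 := norm_ne_zero_iff.2 (sub_ne_zero.2 hzv)
  calc max (h v - h z) 0 * ((‖v - z‖⁻¹ : ℝ) : EReal)
      ≤ ((c * ‖z - v‖ : ℝ) : EReal) * ((‖v - z‖⁻¹ : ℝ) : EReal) := by
        gcongr
        exact max_le (EReal.sub_le_of_le_add' hz) (EReal.coe_nonneg.2 (by positivity))
    _ = c := by
        rw [← EReal.coe_mul, norm_sub_rev v z, mul_assoc, mul_inv_cancel₀ hzv', mul_one]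

theorem Metric.infEDist_le_ofReal_of_forall_mem_Ioo {X : Type*} [PseudoMetricSpace X] {x : X}
    {s : Set X} {a b : ℝ} (hab : a < b) (h : ∀ t ∈ Ioo a b, ∃ y ∈ s, dist x y ≤ t) :
    infEDist x s ≤ ENNReal.ofReal a := by
  refine ge_of_tendsto ((ENNReal.continuous_ofReal.tendsto a).mono_left
    (nhdsWithin_le_nhds (s := Ioi a))) ?_
  filter_upwards [Ioo_mem_nhdsGT hab] with t ht
  obtain ⟨y, hy, hxy⟩ := h t ht
  exact (infEDist_le_edist_of_mem hy).trans (edist_dist x y ▸ ENNReal.ofReal_le_ofReal hxy)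

section SlopeErrorBound

variable {d : ℕ} {h : EuclideanSpace ℝ (Fin d) → EReal} {α β : ℝ}

theorem erealSlope_le_of_forall_clampToReal_le (hlsc : LowerSemicontinuous h) (hαβ : α ≤ β)
    {v : EuclideanSpace ℝ (Fin d)} (hvα : (α : EReal) < h v) (hvβ : h v ≤ β) {c : ℝ} (hc : 0 ≤ c)
    (hmin : ∀ z, clampToReal α β (h v) ≤ clampToReal α β (h z) + c * ‖z - v‖) :
    erealSlope h v ≤ c := by
  refine erealSlope_le_of_eventually_le_add hc ?_
  filter_upwards [(hlsc v α hvα).filter_mono nhdsWithin_le_nhds] with z hz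
  calc h v = clampToReal α β (h v) := (coe_clampToReal_of_mem_Icc hvα.le hvβ).symm
    _ ≤ ((clampToReal α β (h z) + c * ‖z - v‖ : ℝ) : EReal) := EReal.coe_le_coe_iff.2 (hmin z)
    _ ≤ h z + ((c * ‖z - v‖ : ℝ) : EReal) := by
      rw [EReal.coe_add]
      gcongr
      exact coe_clampToReal_le hαβ hz.le

theorem exists_le_and_norm_sub_le_of_slope_bound (hlsc : LowerSemicontinuous h)
    {xb : EuclideanSpace ℝ (Fin d)} {κ ε : ℝ} (hκ : 0 < κ)
    (hslope : ∀ y, ‖y - xb‖ ≤ ε → (α : EReal) < h y → h y ≤ (β : EReal) →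
      ((1 / κ : ℝ) : EReal) ≤ erealSlope h y)
    {y : EuclideanSpace ℝ (Fin d)} (hy : ‖y - xb‖ ≤ ε / 2) {s : ℝ} (hys : h y = s) (hαs : α < s)
    (hsβ : s ≤ β) {t : ℝ} (ht : κ * (s - α) < t) (htε : t ≤ ε / 2) :
    ∃ v, h v ≤ α ∧ ‖v - y‖ ≤ t := by
  have hαβ : α ≤ β := hαs.le.trans hsβ
  have ht0 : 0 < t := (mul_pos hκ (sub_pos.2 hαs)).trans ht
  have hc : 0 < (s - α) / t := div_pos (sub_pos.2 hαs) ht0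
  have hgy : clampToReal α β (h y) = s := by
    rw [← EReal.coe_eq_coe_iff, hys]
    exact coe_clampToReal_of_mem_Icc (EReal.coe_le_coe_iff.2 hαs.le) (EReal.coe_le_coe_iff.2 hsβ)
  obtain ⟨v, hv_drop, hv_min⟩ := exists_forall_le_add_dist_of_lowerSemicontinuous
    (hlsc.clampToReal hαβ) ⟨α, forall_mem_range.2 fun z => le_clampToReal hαβ _⟩ hc y
  simp only [dist_eq_norm, hgy] at hv_drop hv_min
  have hvy : ‖v - y‖ ≤ t := by
    refine le_of_mul_le_mul_left ?_ hc
    rw [div_mul_cancel₀ _ ht0.ne']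
    linarith [le_clampToReal hαβ (h v)]
  refine ⟨v, not_lt.1 fun hvα => ?_, hvy⟩
  have hvβ : h v ≤ β := by
    by_contra! hvβ
    rw [clampToReal_of_le hαβ hvβ.le] at hv_drop
    have : ‖v - y‖ ≤ 0 := by nlinarith [norm_nonneg (v - y)]
    rw [norm_le_zero_iff, sub_eq_zero] at this
    subst this
    exact hvβ.not_ge (hys ▸ EReal.coe_le_coe_iff.2 hsβ)
  have hv_ball : ‖v - xb‖ ≤ ε := by
    linarith [norm_sub_le_norm_sub_add_norm_sub v y xb]
  have := (hslope v hv_ball hvα hvβ).trans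
    (erealSlope_le_of_forall_clampToReal_le hlsc hαβ hvα hvβ hc.le hv_min)
  rw [EReal.coe_le_coe_iff, div_le_div_iff₀ hκ ht0] at this
  linarith

end SlopeErrorBound

/-- `EMetric.infEdist` is `+∞` on the empty set, matching the convention `dist(x, ∅) = +∞`. -/
theorem slope_local_error_bound_general
    {d : ℕ} (h : EuclideanSpace ℝ (Fin d) → EReal)
    (hlsc : LowerSemicontinuous h)
    (xb : EuclideanSpace ℝ (Fin d))
    (α β κ ε : ℝ) (hκ : 0 < κ)
    (hβε : β - α < ε / (2 * κ))
    (hslope : ∀ y, ‖y - xb‖ ≤ ε → (α : EReal) < h y → h y ≤ (β : EReal) →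
      ((1 / κ : ℝ) : EReal) ≤ erealSlope h y) :
    ∀ y, ‖y - xb‖ ≤ ε / 2 → h y ≤ (β : EReal) →
      EMetric.infEdist y {z | h z ≤ (α : EReal)}
        ≤ ENNReal.ofReal (κ * max ((h y).toReal - α) 0) := by
  intro y hy hyβ
  rcases le_or_gt (h y) α with hyα | hyα
  · exact (infEDist_zero_of_mem (s := {z | h z ≤ α}) hyα).trans_le zero_le
  obtain ⟨s, hys⟩ : ∃ s : ℝ, h y = s := ⟨_, (EReal.coe_toReal
    (hyβ.trans_lt (EReal.coe_lt_top β)).ne (hyα.trans' (EReal.bot_lt_coe α)).ne').symm⟩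
  rw [hys, EReal.coe_le_coe_iff] at hyβ
  rw [hys, EReal.coe_lt_coe_iff] at hyα
  rw [hys, EReal.toReal_coe, max_eq_left (sub_nonneg.2 hyα.le)]
  have hκs : κ * (s - α) < ε / 2 := calc
    κ * (s - α) ≤ κ * (β - α) := by gcongr
    _ < κ * (ε / (2 * κ)) := by gcongr
    _ = ε / 2 := by field_simp
  refine infEDist_le_ofReal_of_forall_mem_Ioo hκs fun t ht => ?_
  obtain ⟨v, hvα, hvy⟩ :=
    exists_le_and_norm_sub_le_of_slope_bound hlsc hκ hslope hy hys hyα hyβ ht.1 ht.2.le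
  exact ⟨v, hvα, by rwa [dist_comm, dist_eq_norm]⟩

/-- **Slope-based local error bound on a ball.**
The distance to the sublevel set is measured with `EMetric.infEdist`, which is
`+∞` on the empty set, matching the convention `dist(x, ∅) = +∞`. -/
theorem slope_local_error_bound
    {d : ℕ} (h : EuclideanSpace ℝ (Fin d) → EReal)
    (hlsc : LowerSemicontinuous h) (hbot : ∀ y, h y ≠ ⊥)
    (xb : EuclideanSpace ℝ (Fin d)) (hfin : h xb ≠ ⊤)
    (α β κ ε : ℝ) (hκ : 0 < κ) (hε : 0 < ε)
    (hαβ : 0 < β - α) (hβε : β - α < ε / (2 * κ))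
    (hslope : ∀ y, ‖y - xb‖ ≤ ε → (α : EReal) < h y → h y ≤ (β : EReal) →
      ((1 / κ : ℝ) : EReal) ≤ erealSlope h y) :
    ∀ y, ‖y - xb‖ ≤ ε / 2 → h y ≤ (β : EReal) →
      EMetric.infEdist y {z | h z ≤ (α : EReal)}
        ≤ ENNReal.ofReal (κ * max ((h y).toReal - α) 0) :=
  slope_local_error_bound_general h hlsc xb α β κ ε hκ hβε hslope
end
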